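/- Let X ~ Heine(λ) with parameter 0 < q < 1, λ > 0, i.e. P(X=j) = e_q(-λ) q^{j(j-1)/2}(λ(1-q))^j/(q;q)_j. If a > 1/q, then there exists C > 0 with p_j ≥ C a^{-j(j-1)/2} for all j; hence the log-Heine distribution of Y = a^X admits a perturbation and is moment-indeterminate. -/

import Mathlib

/-!
Write `c_b(j) = b^(j choose 2) / (b; b)_j`, the coefficients of Euler's product
`E_b(x) = ∏_{s ≥ 0} (1 + b^s x)`. The Heine weights are `p_j = c_q(j) t^j / Z` with
`t = λ(1 - q)`. Since `(q; q)_j ≤ 1` and `(qa)^(j choose 2) t^j` is bounded below (its reciprocal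
is dominated by the summable `c_{1/(qa)}(j) t^(-j)`), `p_j ≥ C a^(-(j choose 2))`.
Conversely `(1/a; 1/a)_j` stays away from `0`, so `c_{1/a}(j) = O(a^(-(j choose 2))) = O(p_j)`,
and the functional equation `E_b(x) = (1 + x) E_b(b x)` gives
`∑_j c_{1/a}(j) (-a^k)^j = E_{1/a}(-a^k) = 0` for every `k`. Hence `h_j ∝ (-1)^j c_{1/a}(j) / p_j`
is bounded and kills every moment, and `p (1 + h / 2)` is a different nonnegative sequence with
the same moments.
-/

open Finset Filter Topology

/-- The `q`-Pochhammer symbol `(b; b)_j`. -/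
noncomputable def qPochhammer (b : ℝ) (j : ℕ) : ℝ :=
  ∏ s ∈ range j, (1 - b ^ (s + 1))

/-- Coefficients of Euler's product `∏_{s ≥ 0} (1 + b ^ s x) = ∑_j eulerCoeff b j * x ^ j`. -/
noncomputable def eulerCoeff (b : ℝ) (j : ℕ) : ℝ :=
  b ^ j.choose 2 / qPochhammer b j

lemma Real.exp_neg_div_one_sub_le {x : ℝ} (hx1 : x < 1) : Real.exp (-(x / (1 - x))) ≤ 1 - x := by
  have h1x : 0 < 1 - x := sub_pos.2 hx1
  have key : 1 / (1 - x) ≤ Real.exp (x / (1 - x)) := by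
    calc 1 / (1 - x) = x / (1 - x) + 1 := by field_simp; ring
      _ ≤ _ := Real.add_one_le_exp _
  rw [Real.exp_neg, inv_le_comm₀ (Real.exp_pos _) h1x]
  simpa using key

lemma Real.one_le_tprod {f : ℕ → ℝ} (hf : ∀ s, 1 ≤ f s) : 1 ≤ ∏' s, f s := by
  by_cases hm : Multipliable f
  · exact ge_of_tendsto' hm.hasProd fun _ => Finset.one_le_prod fun s _ => hf s
  · rw [tprod_eq_one_of_not_multipliable hm]

section qPochhammer

variable {b : ℝ}

lemma one_sub_pow_succ_pos (hb0 : 0 ≤ b) (hb1 : b < 1) (s : ℕ) : 0 < 1 - b ^ (s + 1) :=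
  sub_pos.2 (pow_lt_one₀ hb0 hb1 s.succ_ne_zero)

lemma qPochhammer_pos (hb0 : 0 ≤ b) (hb1 : b < 1) (j : ℕ) : 0 < qPochhammer b j :=
  prod_pos fun s _ => one_sub_pow_succ_pos hb0 hb1 s

lemma qPochhammer_le_one (hb0 : 0 ≤ b) (hb1 : b < 1) (j : ℕ) : qPochhammer b j ≤ 1 :=
  prod_le_one (fun s _ => (one_sub_pow_succ_pos hb0 hb1 s).le)
    fun _ _ => sub_le_self _ (pow_nonneg hb0 _)

lemma qPochhammer_succ (b : ℝ) (j : ℕ) :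
    qPochhammer b (j + 1) = qPochhammer b j * (1 - b ^ (j + 1)) :=
  prod_range_succ _ _

/-- Each factor satisfies `1 - b^(s+1) ≥ exp (-b^(s+1) / (1 - b))`, and these exponents are
summable. -/
lemma exists_pos_le_qPochhammer (hb0 : 0 ≤ b) (hb1 : b < 1) :
    ∃ D > 0, ∀ j, D ≤ qPochhammer b j := by
  have hsum : Summable fun s : ℕ => b ^ (s + 1) / (1 - b) :=
    ((summable_geometric_of_lt_one hb0 hb1).mul_left b).div_const (1 - b) |>.congr fun s => by ring
  refine ⟨Real.exp (-∑' s : ℕ, b ^ (s + 1) / (1 - b)), Real.exp_pos _, fun j => ?_⟩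
  have hfactor : ∀ s : ℕ, Real.exp (-(b ^ (s + 1) / (1 - b))) ≤ 1 - b ^ (s + 1) := fun s =>
    calc Real.exp (-(b ^ (s + 1) / (1 - b)))
        ≤ Real.exp (-(b ^ (s + 1) / (1 - b ^ (s + 1)))) := by
          gcongr
          exact pow_le_of_le_one hb0 hb1.le s.succ_ne_zero
      _ ≤ 1 - b ^ (s + 1) := Real.exp_neg_div_one_sub_le (pow_lt_one₀ hb0 hb1 s.succ_ne_zero)
  calc Real.exp (-∑' s : ℕ, b ^ (s + 1) / (1 - b))
      ≤ Real.exp (-∑ s ∈ range j, b ^ (s + 1) / (1 - b)) := by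
        gcongr
        exact hsum.sum_le_tsum _ fun s _ => div_nonneg (pow_nonneg hb0 _) (sub_pos.2 hb1).le
    _ = ∏ s ∈ range j, Real.exp (-(b ^ (s + 1) / (1 - b))) := by
        rw [← sum_neg_distrib, Real.exp_sum]
    _ ≤ qPochhammer b j := prod_le_prod (fun s _ => (Real.exp_pos _).le) fun s _ => hfactor s

end qPochhammer

section eulerCoeff

variable {b : ℝ}

lemma eulerCoeff_pos (hb0 : 0 < b) (hb1 : b < 1) (j : ℕ) : 0 < eulerCoeff b j :=
  div_pos (pow_pos hb0 _) (qPochhammer_pos hb0.le hb1 j)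

lemma pow_choose_two_le_eulerCoeff (hb0 : 0 ≤ b) (hb1 : b < 1) (j : ℕ) :
    b ^ j.choose 2 ≤ eulerCoeff b j := by
  rw [eulerCoeff, le_div_iff₀ (qPochhammer_pos hb0 hb1 j)]
  exact mul_le_of_le_one_right (pow_nonneg hb0 _) (qPochhammer_le_one hb0 hb1 j)

lemma exists_eulerCoeff_le_mul_pow_choose_two (hb0 : 0 ≤ b) (hb1 : b < 1) :
    ∃ D > 0, ∀ j, eulerCoeff b j ≤ D * b ^ j.choose 2 := by
  obtain ⟨D, hD, hle⟩ := exists_pos_le_qPochhammer hb0 hb1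
  refine ⟨D⁻¹, inv_pos.2 hD, fun j => ?_⟩
  rw [eulerCoeff, div_eq_inv_mul]
  gcongr
  exact hle j

lemma eulerCoeff_succ_mul (hb0 : 0 ≤ b) (hb1 : b < 1) (j : ℕ) :
    eulerCoeff b (j + 1) * (1 - b ^ (j + 1)) = eulerCoeff b j * b ^ j := by
  have := qPochhammer_pos hb0 hb1 j
  have := one_sub_pow_succ_pos hb0 hb1 j
  rw [eulerCoeff, eulerCoeff, qPochhammer_succ, Nat.choose_succ_succ', Nat.choose_one_right,
    pow_add]
  field_simp

lemma summable_eulerCoeff_mul_pow (hb0 : 0 < b) (hb1 : b < 1) (x : ℝ) :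
    Summable fun j => eulerCoeff b j * x ^ j := by
  set ρ : ℕ → ℝ := fun j => b ^ j * |x| / (1 - b ^ (j + 1))
  have hρ : Tendsto ρ atTop (𝓝 0) := by
    have hpow := tendsto_pow_atTop_nhds_zero_of_lt_one hb0.le hb1
    have := (hpow.mul_const |x|).div ((hpow.comp (tendsto_add_atTop_nat 1)).const_sub 1)
      (by norm_num)
    rwa [zero_mul, sub_zero, zero_div] at this
  refine summable_of_ratio_norm_eventually_le (by norm_num : (1 / 2 : ℝ) < 1) ?_
  filter_upwards [hρ.eventually_le_const (by norm_num : (0 : ℝ) < 1 / 2)] with j hj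
  have hstep : ‖eulerCoeff b (j + 1) * x ^ (j + 1)‖ = ρ j * ‖eulerCoeff b j * x ^ j‖ := by
    have := one_sub_pow_succ_pos hb0.le hb1 j
    rw [eq_div_of_mul_eq this.ne' (eulerCoeff_succ_mul hb0.le hb1 j)]
    simp only [ρ, norm_mul, norm_div, norm_pow, Real.norm_eq_abs, abs_of_pos this,
      abs_of_pos hb0, abs_of_pos (eulerCoeff_pos hb0 hb1 j)]
    ring
  rw [hstep]
  exact mul_le_mul_of_nonneg_right hj (norm_nonneg _)

lemma tsum_eulerCoeff_mul_pow (hb0 : 0 < b) (hb1 : b < 1) (x : ℝ) :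
    ∑' j, eulerCoeff b j * x ^ j = (1 + x) * ∑' j, eulerCoeff b j * (b * x) ^ j := by
  have hE := summable_eulerCoeff_mul_pow hb0 hb1 (b * x)
  have hshift : ∀ j, eulerCoeff b (j + 1) * x ^ (j + 1) =
      eulerCoeff b (j + 1) * (b * x) ^ (j + 1) + x * (eulerCoeff b j * (b * x) ^ j) := fun j => by
    have := eulerCoeff_succ_mul hb0.le hb1 j
    linear_combination x ^ (j + 1) * this
  rw [(summable_eulerCoeff_mul_pow hb0 hb1 x).tsum_eq_zero_add, tsum_congr hshift,
    ((summable_nat_add_iff 1).2 hE).tsum_add (hE.mul_left x), tsum_mul_left, hE.tsum_eq_zero_add]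
  simp only [pow_zero, mul_one, eulerCoeff, Nat.choose_zero_succ, qPochhammer, range_zero,
    prod_empty, div_one]
  ring

/-- `E(-a^k) = (1 - a^k) E(-a^(k-1)) = ⋯ = 0`, because the factor `1 + x` vanishes at `x = -1`. -/
lemma tsum_eulerCoeff_inv_mul_neg_pow {a : ℝ} (ha : 1 < a) (k : ℕ) :
    ∑' j, eulerCoeff a⁻¹ j * (-a ^ k) ^ j = 0 := by
  have hb0 : 0 < a⁻¹ := inv_pos.2 (zero_lt_one.trans ha)
  have hb1 : a⁻¹ < 1 := inv_lt_one_of_one_lt₀ ha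
  induction k with
  | zero => rw [tsum_eulerCoeff_mul_pow hb0 hb1, pow_zero, add_neg_cancel, zero_mul]
  | succ k ih =>
    rw [tsum_eulerCoeff_mul_pow hb0 hb1, pow_succ', mul_neg, inv_mul_cancel_left₀ (by positivity),
      ih, mul_zero]

end eulerCoeff

lemma exists_pos_le_pow_choose_two_mul_pow {c t : ℝ} (hc : 1 < c) (ht : 0 < t) :
    ∃ C > 0, ∀ j, C ≤ c ^ j.choose 2 * t ^ j := by
  have hb0 : 0 < c⁻¹ := inv_pos.2 (zero_lt_one.trans hc)
  have hb1 : c⁻¹ < 1 := inv_lt_one_of_one_lt₀ hc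
  have hsum := summable_eulerCoeff_mul_pow hb0 hb1 t⁻¹
  have hnonneg : ∀ j, 0 ≤ eulerCoeff c⁻¹ j * t⁻¹ ^ j := fun j =>
    mul_nonneg (eulerCoeff_pos hb0 hb1 j).le (by positivity)
  have hS : 0 < ∑' j, eulerCoeff c⁻¹ j * t⁻¹ ^ j :=
    (eulerCoeff_pos hb0 hb1 0).trans_le (by simpa using hsum.le_tsum 0 fun j _ => hnonneg j)
  refine ⟨_, inv_pos.2 hS, fun j => inv_le_of_inv_le₀ (by positivity) ?_⟩
  calc (c ^ j.choose 2 * t ^ j)⁻¹ = c⁻¹ ^ j.choose 2 * t⁻¹ ^ j := by rw [mul_inv, inv_pow, inv_pow]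
    _ ≤ eulerCoeff c⁻¹ j * t⁻¹ ^ j := by
        gcongr
        exact pow_choose_two_le_eulerCoeff hb0.le hb1 j
    _ ≤ _ := hsum.le_tsum j fun i _ => hnonneg i

lemma exists_pos_mul_inv_pow_le_eulerCoeff_mul_pow {q a t : ℝ} (hq0 : 0 < q) (hq1 : q < 1)
    (hqa : 1 < q * a) (ht : 0 < t) :
    ∃ C > 0, ∀ j, C * (a ^ j.choose 2)⁻¹ ≤ eulerCoeff q j * t ^ j := by
  obtain ⟨C, hC, hle⟩ := exists_pos_le_pow_choose_two_mul_pow hqa ht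
  have ha : 0 < a := pos_of_mul_pos_right (zero_lt_one.trans hqa) hq0.le
  refine ⟨C, hC, fun j => ?_⟩
  calc C * (a ^ j.choose 2)⁻¹ ≤ (q * a) ^ j.choose 2 * t ^ j * (a ^ j.choose 2)⁻¹ := by
        gcongr
        exact hle j
    _ = q ^ j.choose 2 * t ^ j := by
        rw [mul_pow]
        field_simp
    _ ≤ eulerCoeff q j * t ^ j := by
        gcongr
        exact pow_choose_two_le_eulerCoeff hq0.le hq1 j

lemma exists_iSup_abs_eq_one_of_abs_le {p g : ℕ → ℝ} {B : ℝ} (hp : ∀ j, 0 < p j) (hg : g ≠ 0)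
    (hB : ∀ j, |g j| ≤ B * p j) :
    ∃ h : ℕ → ℝ, h ≠ 0 ∧ (⨆ j, |h j|) = 1 ∧ (∀ j, |h j| ≤ 1) ∧
      ∃ c : ℝ, ∀ j, p j * h j = c * g j := by
  have hbdd : BddAbove (Set.range fun j => |g j| / p j) :=
    ⟨B, Set.forall_mem_range.2 fun j => (div_le_iff₀ (hp j)).2 (hB j)⟩
  set M := ⨆ j, |g j| / p j
  obtain ⟨j₀, hj₀⟩ := Function.ne_iff.1 hg
  have hM : 0 < M :=
    (div_pos (abs_pos.2 hj₀) (hp j₀)).trans_le (le_ciSup hbdd j₀)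
  have habs : ∀ j, |g j / (M * p j)| = M⁻¹ * (|g j| / p j) := fun j => by
    rw [abs_div, abs_mul, abs_of_pos hM, abs_of_pos (hp j)]
    ring
  refine ⟨fun j => g j / (M * p j), Function.ne_iff.2 ⟨j₀, ?_⟩, ?_, fun j => ?_, M⁻¹, fun j => ?_⟩
  · exact div_ne_zero hj₀ (mul_pos hM (hp j₀)).ne'
  · simp only [habs, ← Real.mul_iSup_of_nonneg (inv_nonneg.2 hM.le)]
    exact inv_mul_cancel₀ hM.ne'
  · rw [habs, inv_mul_le_iff₀ hM, mul_one]
    exact le_ciSup hbdd j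
  · field_simp [(hp j).ne']

lemma exists_ne_nonneg_tsum_pow_mul_eq {a : ℝ} {p h : ℕ → ℝ} (hp : ∀ j, 0 < p j) (hh : h ≠ 0)
    (hh1 : ∀ j, |h j| ≤ 1) (hps : ∀ k : ℕ, Summable fun j => a ^ (k * j) * p j)
    (hphs : ∀ k : ℕ, Summable fun j => a ^ (k * j) * p j * h j)
    (hmom : ∀ k : ℕ, ∑' j, a ^ (k * j) * p j * h j = 0) :
    ∃ p' : ℕ → ℝ, (∀ j, 0 ≤ p' j) ∧ (∑' j, p' j) = ∑' j, p j ∧ p' ≠ p ∧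
      ∀ k : ℕ, (∑' j, a ^ (k * j) * p' j) = ∑' j, a ^ (k * j) * p j := by
  have hmom' : ∀ k : ℕ, (∑' j, a ^ (k * j) * (p j * (1 + h j / 2))) = ∑' j, a ^ (k * j) * p j :=
    fun k => by
      have hsplit : ∀ j, a ^ (k * j) * (p j * (1 + h j / 2)) =
          a ^ (k * j) * p j + 2⁻¹ * (a ^ (k * j) * p j * h j) := fun j => by ring
      rw [tsum_congr hsplit, (hps k).tsum_add ((hphs k).mul_left _), tsum_mul_left, hmom k,
        mul_zero, add_zero]
  refine ⟨fun j => p j * (1 + h j / 2), fun j => ?_, by simpa using hmom' 0, fun heq => ?_, hmom'⟩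
  · have := (abs_le.1 (hh1 j)).1
    exact mul_nonneg (hp j).le (by linarith)
  · obtain ⟨j, hj⟩ := Function.ne_iff.1 hh
    have : p j * (h j / 2) = 0 := by linear_combination congrFun heq j
    exact mul_ne_zero (hp j).ne' (div_ne_zero hj two_ne_zero) this

lemma exists_moment_null_of_pow_choose_two_le {a C : ℝ} {p : ℕ → ℝ} (ha : 1 < a)
    (hp : ∀ j, 0 < p j) (hC : 0 < C) (hlow : ∀ j, C * (a ^ j.choose 2)⁻¹ ≤ p j) :
    ∃ h : ℕ → ℝ, h ≠ 0 ∧ (⨆ j, |h j|) = 1 ∧ (∀ j, |h j| ≤ 1) ∧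
      ∀ k : ℕ, Summable (fun j => |a ^ (k * j) * p j * h j|) ∧
        ∑' j, a ^ (k * j) * p j * h j = 0 := by
  have hb0 : 0 < a⁻¹ := inv_pos.2 (zero_lt_one.trans ha)
  have hb1 : a⁻¹ < 1 := inv_lt_one_of_one_lt₀ ha
  obtain ⟨D, hD, hup⟩ := exists_eulerCoeff_le_mul_pow_choose_two hb0.le hb1
  set g : ℕ → ℝ := fun j => eulerCoeff a⁻¹ j * (-1) ^ j
  have hg_le : ∀ j, |g j| ≤ D / C * p j := fun j =>
    calc |g j| = eulerCoeff a⁻¹ j := by simp [g, abs_of_pos (eulerCoeff_pos hb0 hb1 j)]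
      _ ≤ D * a⁻¹ ^ j.choose 2 := hup j
      _ = D / C * (C * (a ^ j.choose 2)⁻¹) := by rw [inv_pow]; field_simp
      _ ≤ D / C * p j := by gcongr; exact hlow j
  have hg_ne : g ≠ 0 := Function.ne_iff.2 ⟨0, by simp [g, (eulerCoeff_pos hb0 hb1 0).ne']⟩
  obtain ⟨h, hh, hsup, hh1, c, hc⟩ := exists_iSup_abs_eq_one_of_abs_le hp hg_ne hg_le
  have hmoment : ∀ k j : ℕ,
      a ^ (k * j) * p j * h j = c * (eulerCoeff a⁻¹ j * (-a ^ k) ^ j) := fun k j => by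
    rw [mul_assoc, hc, neg_pow, pow_mul]
    ring
  refine ⟨h, hh, hsup, hh1, fun k => ⟨?_, ?_⟩⟩
  · exact ((summable_eulerCoeff_mul_pow hb0 hb1 _).mul_left c).abs.congr fun j => by
      rw [hmoment]
  · rw [tsum_congr (hmoment k), tsum_mul_left, tsum_eulerCoeff_inv_mul_neg_pow ha k, mul_zero]

/-- Log-Heine, `a > 1/q`: the Heine probabilities satisfy `p_j ≥ C a^{-j(j-1)/2}` for
some `C > 0`; hence the log-Heine law of `Y = a^X` admits a perturbation and is
moment-indeterminate. -/
theorem log_heine_stieltjes_exists (q lam a : ℝ) (hq0 : 0 < q) (hq1 : q < 1)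
    (hlam : 0 < lam) (ha : 1 / q < a)
    (p : ℕ → ℝ)
    (hpdef : ∀ j : ℕ, p j = (∏' s : ℕ, (1 + lam * (1 - q) * q ^ s))⁻¹ *
      q ^ (j * (j - 1) / 2) * (lam * (1 - q)) ^ j /
        ∏ s ∈ Finset.range j, (1 - q ^ (s + 1))) :
    (∃ C > (0 : ℝ), ∀ j : ℕ, C * (a ^ (j * (j - 1) / 2))⁻¹ ≤ p j) ∧
    (∃ h : ℕ → ℝ, h ≠ 0 ∧ (⨆ j : ℕ, |h j|) = 1 ∧
      ∀ k : ℕ, Summable (fun j : ℕ => |a ^ (k * j) * p j * h j|) ∧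
        (∑' j : ℕ, a ^ (k * j) * p j * h j) = 0) ∧
    (∃ p' : ℕ → ℝ, (∀ j, 0 ≤ p' j) ∧ (∑' j, p' j) = ∑' j, p j ∧ p' ≠ p ∧
      ∀ k : ℕ, (∑' j : ℕ, a ^ (k * j) * p' j) = ∑' j : ℕ, a ^ (k * j) * p j) := by
  have hqa : 1 < q * a := by rwa [div_lt_iff₀ hq0, mul_comm] at ha
  have ht : 0 < lam * (1 - q) := mul_pos hlam (sub_pos.2 hq1)
  set Z := ∏' s : ℕ, (1 + lam * (1 - q) * q ^ s)
  have hZ : 0 < Z := zero_lt_one.trans_le <|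
    Real.one_le_tprod fun s => le_add_of_nonneg_right (by positivity)
  have hp : ∀ j, p j = Z⁻¹ * (eulerCoeff q j * (lam * (1 - q)) ^ j) := fun j => by
    rw [hpdef, eulerCoeff, qPochhammer, Nat.choose_two_right]
    ring
  have hp_pos : ∀ j, 0 < p j := fun j => by
    have := eulerCoeff_pos hq0 hq1 j
    rw [hp]
    positivity
  have hp_moments : ∀ k : ℕ, Summable fun j => a ^ (k * j) * p j := fun k =>
    ((summable_eulerCoeff_mul_pow hq0 hq1 (a ^ k * (lam * (1 - q)))).mul_left Z⁻¹).congr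
      fun j => by rw [hp, pow_mul, mul_pow]; ring
  obtain ⟨C, hC, hlow⟩ := exists_pos_mul_inv_pow_le_eulerCoeff_mul_pow hq0 hq1 hqa ht
  have hlow_p : ∀ j, Z⁻¹ * C * (a ^ j.choose 2)⁻¹ ≤ p j := fun j => by
    rw [hp, mul_assoc]
    exact mul_le_mul_of_nonneg_left (hlow j) (inv_pos.2 hZ).le
  obtain ⟨h, hh, hsup, hh1, hmom⟩ := exists_moment_null_of_pow_choose_two_le
    ((one_lt_one_div hq0 hq1).trans ha) hp_pos (by positivity) hlow_p
  refine ⟨⟨Z⁻¹ * C, by positivity, by simpa only [Nat.choose_two_right] using hlow_p⟩,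
    ⟨h, hh, hsup, hmom⟩, ?_⟩
  exact exists_ne_nonneg_tsum_pow_mul_eq hp_pos hh hh1 hp_moments
    (fun k => (hmom k).1.of_abs) fun k => (hmom k).2
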